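/- arXiv:1004.2874 — 4 statements merged into one kernel-verified Lean document; each statement's English description precedes it below -/
import Mathlib

section
/- Let $B^* \subset \mathbb{R}^k$ be a bounded open set, $M > 1$, $R > 0$, and let $\Omega_m \in \mathscr{C}_{M,R}$ converge in the Hausdorff complementary distance to a nonempty open set $\Omega \subset B^*$. Then $\Omega$ is connected. -/
open Metric Filter

/-- Property `(C_M)`. -/
def PropertyCM {k : ℕ} (M : ℝ) (Ω : Set (EuclideanSpace ℝ (Fin k))) : Prop :=
  ∀ x ∈ Ω, ∀ y ∈ Ω, ∃ K : Set (EuclideanSpace ℝ (Fin k)),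
    IsCompact K ∧ IsConnected K ∧ x ∈ K ∧ y ∈ K ∧ K ⊆ Ω ∧
    ∀ z ∈ K, ball z (min (infDist x (frontier Ω)) (infDist y (frontier Ω)) / M) ⊆ Ω

/-- The class `𝒞_{M,R}` of open subsets of `B*` containing a ball of radius `R`
and satisfying property `(C_M)`. -/
def ClassCMR {k : ℕ} (M R : ℝ) (Bstar Ω : Set (EuclideanSpace ℝ (Fin k))) : Prop :=
  IsOpen Ω ∧ Ω ⊆ Bstar ∧ (∃ xΩ, ball xΩ R ⊆ Ω) ∧ PropertyCM M Ω

open Set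

/-!
Two points `x, y ∈ Ω` are centres of balls of some radius `r` inside `Ω`, so they are at
distance `≥ r` from `F = closure B* \ Ω`. Once the Hausdorff distance `h` between `F` and
`Fₘ = closure B* \ Ωₘ` satisfies `h (M + 1) < r`, the points `x, y` lie in `Ωₘ` at distance
`≥ r - h` from `Fₘ ⊇ ∂Ωₘ`, so `(C_M)` joins them by a continuum `K ⊆ Ωₘ` whose points are at
distance `≥ (r - h) / M > h` from `Fₘ`, hence at positive distance from `F`: thus `K ⊆ Ω`.
-/

section PseudoMetricSpace

variable {α : Type*} [PseudoMetricSpace α] {s t C V : Set α} {x : α} {r : ℝ}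

theorem Metric.le_infDist_of_disjoint_ball (hs : s.Nonempty) (h : Disjoint (ball x r) s) :
    r ≤ infDist x s :=
  (le_infDist hs).2 fun _ hy => le_of_not_gt fun hlt => disjoint_left.1 h (mem_ball'.2 hlt) hy

theorem Metric.sub_hausdorffDist_le_infDist_of_disjoint_ball (hs : s.Nonempty)
    (hst : hausdorffEDist s t ≠ ⊤) (h : Disjoint (ball x r) s) :
    r - hausdorffDist s t ≤ infDist x t := by
  have := infDist_le_infDist_add_hausdorffDist (x := x) (hausdorffEDist_comm.trans_ne hst)
  linarith [le_infDist_of_disjoint_ball hs h, hausdorffDist_comm (s := s) (t := t)]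

theorem Metric.mem_of_infDist_diff_pos (hx : x ∈ C) (h : 0 < infDist x (C \ V)) : x ∈ V := by
  by_contra hxV
  exact h.ne' (infDist_zero_of_mem ⟨hx, hxV⟩)

end PseudoMetricSpace

theorem IsClosed.diff_nonempty_of_ne_univ {α : Type*} [TopologicalSpace α] [PreconnectedSpace α]
    {C U : Set α} (hC : IsClosed C) (hCne : C.Nonempty) (hUo : IsOpen U) (hUC : U ⊆ C)
    (hU : U ≠ univ) : (C \ U).Nonempty := by
  by_contra! h
  have hUeq : U = C := hUC.antisymm (sdiff_eq_empty.1 h)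
  exact hU ((isClopen_iff.1 ⟨hUeq ▸ hC, hUo⟩).resolve_left (hUeq ▸ hCne.ne_empty))

theorem Metric.infDist_diff_le_infDist_frontier {α : Type*} [PseudoMetricSpace α]
    [PreconnectedSpace α] {C U : Set α} {x : α} (hUo : IsOpen U) (hC : IsClosed C) (hUC : U ⊆ C)
    (hx : x ∈ U) (hCU : (C \ U).Nonempty) :
    infDist x (C \ U) ≤ infDist x (frontier U) :=
  infDist_le_infDist_of_subset
    (hUo.frontier_eq ▸ sdiff_subset_sdiff_left (closure_minimal hUC hC))
    (nonempty_frontier_iff.2 ⟨⟨x, hx⟩, nonempty_compl.1 (hCU.mono (sdiff_subset_compl _ _))⟩)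

theorem PropertyCM.exists_isConnected_subset {k : ℕ} {M r : ℝ}
    {C U V : Set (EuclideanSpace ℝ (Fin k))} {x y : EuclideanSpace ℝ (Fin k)}
    (hU : PropertyCM M U) (hM : 0 < M) (hUo : IsOpen U) (hC : IsClosed C)
    (hCb : Bornology.IsBounded C) (hUC : U ⊆ C) (hVC : V ⊆ C)
    (hCU : (C \ U).Nonempty) (hCV : (C \ V).Nonempty)
    (hUV : hausdorffDist (C \ U) (C \ V) * (M + 1) < r)
    (hx : ball x r ⊆ V) (hy : ball y r ⊆ V) :
    ∃ K ⊆ V, x ∈ K ∧ y ∈ K ∧ IsConnected K := by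
  set h := hausdorffDist (C \ U) (C \ V)
  have h0 : 0 ≤ h := hausdorffDist_nonneg
  have hfin : hausdorffEDist (C \ U) (C \ V) ≠ ⊤ :=
    hausdorffEDist_ne_top_of_nonempty_of_bounded hCU hCV (hCb.subset sdiff_subset)
      (hCb.subset sdiff_subset)
  have hr : h < r := by nlinarith
  have hdeep : ∀ z, ball z r ⊆ V → z ∈ U ∧ r - h ≤ infDist z (C \ U) := by
    intro z hz
    have hd := sub_hausdorffDist_le_infDist_of_disjoint_ball hCV
      (hausdorffEDist_comm.trans_ne hfin) (disjoint_sdiff_right.mono_left hz)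
    rw [hausdorffDist_comm] at hd
    exact ⟨mem_of_infDist_diff_pos (hVC (hz (mem_ball_self (by linarith)))) (by linarith), hd⟩
  obtain ⟨hxU, hxd⟩ := hdeep x hx
  obtain ⟨hyU, hyd⟩ := hdeep y hy
  obtain ⟨K, -, hK, hxK, hyK, hKU, hKball⟩ := hU x hxU y hyU
  refine ⟨K, fun z hz => ?_, hxK, hyK, hK⟩
  have hd : (r - h) / M ≤ min (infDist x (frontier U)) (infDist y (frontier U)) / M := by
    gcongr
    exact le_min (hxd.trans (infDist_diff_le_infDist_frontier hUo hC hUC hxU hCU))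
      (hyd.trans (infDist_diff_le_infDist_frontier hUo hC hUC hyU hCU))
  have hzd := sub_hausdorffDist_le_infDist_of_disjoint_ball hCU hfin
    (disjoint_sdiff_right.mono_left (hKball z hz))
  have hrM : h < (r - h) / M := by rw [lt_div_iff₀ hM]; linarith
  exact mem_of_infDist_diff_pos (hUC (hKU hz)) (by linarith)

theorem stmt10_general {k : ℕ} (Bstar : Set (EuclideanSpace ℝ (Fin k)))
    (hBb : Bornology.IsBounded Bstar)
    (M R : ℝ) (hM : 1 < M)
    (Ωm : ℕ → Set (EuclideanSpace ℝ (Fin k)))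
    (hΩm : ∀ m, ClassCMR M R Bstar (Ωm m))
    (Ω : Set (EuclideanSpace ℝ (Fin k))) (hΩo : IsOpen Ω) (hΩB : Ω ⊆ Bstar)
    (hΩne : Ω.Nonempty)
    (hconv : Tendsto (fun m => hausdorffDist (closure Bstar \ Ωm m) (closure Bstar \ Ω))
      atTop (nhds 0)) :
    IsConnected Ω := by
  rcases subsingleton_or_nontrivial (EuclideanSpace ℝ (Fin k)) with hE | hE
  · exact ⟨hΩne, subsingleton_of_subsingleton.isPreconnected⟩
  have ne_univ_of_subset {s} (hs : s ⊆ Bstar) : s ≠ univ := fun h =>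
    NormedSpace.unbounded_univ ℝ _ (h ▸ hBb.subset hs)
  have hCne : (closure Bstar).Nonempty := hΩne.mono (hΩB.trans subset_closure)
  refine ⟨hΩne, isPreconnected_of_forall_pair fun x hx y hy => ?_⟩
  obtain ⟨rx, hrx, hxr⟩ := isOpen_iff.1 hΩo x hx
  obtain ⟨ry, hry, hyr⟩ := isOpen_iff.1 hΩo y hy
  obtain ⟨m, hm⟩ := (hconv.eventually (gt_mem_nhds (show 0 < min rx ry / (M + 1) by
    have := lt_min hrx hry; positivity))).exists
  obtain ⟨hΩmo, hΩmB, -, hCM⟩ := hΩm m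
  have hΩmC := hΩmB.trans subset_closure
  have hΩC := hΩB.trans subset_closure
  obtain ⟨K, hKΩ, hxK, hyK, hK⟩ := hCM.exists_isConnected_subset (by linarith) hΩmo
    isClosed_closure hBb.closure hΩmC hΩC
    (isClosed_closure.diff_nonempty_of_ne_univ hCne hΩmo hΩmC (ne_univ_of_subset hΩmB))
    (isClosed_closure.diff_nonempty_of_ne_univ hCne hΩo hΩC (ne_univ_of_subset hΩB))
    ((lt_div_iff₀ (by linarith)).1 hm)
    ((ball_subset_ball (min_le_left _ _)).trans hxr)
    ((ball_subset_ball (min_le_right _ _)).trans hyr)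
  exact ⟨K, hKΩ, hxK, hyK, hK.isPreconnected⟩

theorem stmt10 {k : ℕ} (Bstar : Set (EuclideanSpace ℝ (Fin k)))
    (hBo : IsOpen Bstar) (hBb : Bornology.IsBounded Bstar)
    (M R : ℝ) (hM : 1 < M) (hR : 0 < R)
    (Ωm : ℕ → Set (EuclideanSpace ℝ (Fin k)))
    (hΩm : ∀ m, ClassCMR M R Bstar (Ωm m))
    (Ω : Set (EuclideanSpace ℝ (Fin k))) (hΩo : IsOpen Ω) (hΩB : Ω ⊆ Bstar)
    (hΩne : Ω.Nonempty)
    (hconv : Tendsto (fun m => hausdorffDist (closure Bstar \ Ωm m) (closure Bstar \ Ω))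
      atTop (nhds 0)) :
    IsConnected Ω :=
  stmt10_general Bstar hBb M R hM Ωm hΩm Ω hΩo hΩB hΩne hconv
end

section
/- Let $B^* \subset \mathbb{R}^k$ be a bounded open set, $M > 1$, $R > 0$. Then the class $\mathscr{C}_{M,R}$ equipped with the Hausdorff complementary distance $\rho$ is a compact metric space: every sequence $(\Omega_m) \subset \mathscr{C}_{M,R}$ has a subsequence converging in $\rho$ to some $\Omega \in \mathscr{C}_{M,R}$. -/
/-!
Along a subsequence, the compact complements `closure B* \ Ωₘ` converge in the Hausdorff
metric to some `G` and the centres of the inner `R`-balls converge to some `x₀`; the limit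
domain is `B* \ G`. A ball lying in `Ωₘ` while the complement of `Ωₘ` is `ε`-close to `G`
shrinks by `ε` to a ball avoiding `G`, which gives `B(x₀, R) ⊆ B* \ G`. For `(C_M)`, points
`x, y` of the limit, at distance at least `d` from `G`, lie in `Ωₘ` for all large `m`, at
distance at least `d - εₘ` from its frontier. The continua joining them in `Ωₘ` have, by
Blaschke's selection theorem, a Hausdorff limit which is again a continuum through `x` and `y`,
and their `(d - εₘ)/M`-tubes in `Ωₘ` pass to a `d/M`-tube around the limit.
-/

open Metric Filter

open Set Topology TopologicalSpace

section HausdorffLimits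

variable {E : Type*} [MetricSpace E]

theorem IsCompact.exists_subseq_tendsto_hausdorffDist {X : Set E} (hX : IsCompact X)
    {A : ℕ → Set E} (hA : ∀ n, IsClosed (A n)) (hAne : ∀ n, (A n).Nonempty)
    (hAX : ∀ n, A n ⊆ X) :
    ∃ L, IsCompact L ∧ L.Nonempty ∧ L ⊆ X ∧ ∃ φ : ℕ → ℕ, StrictMono φ ∧
      Tendsto (fun n => hausdorffDist (A (φ n)) L) atTop (𝓝 0) := by
  have : CompactSpace X := isCompact_iff_compactSpace.mp hX
  let A' : ℕ → NonemptyCompacts X := fun n =>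
    ⟨⟨Subtype.val ⁻¹' A n, ((hA n).preimage continuous_subtype_val).isCompact⟩,
      let ⟨a, ha⟩ := hAne n; ⟨⟨a, hAX n ha⟩, ha⟩⟩
  obtain ⟨L, φ, hφ, hL⟩ := CompactSpace.tendsto_subseq A'
  refine ⟨Subtype.val '' (L : Set X), L.isCompact.image continuous_subtype_val,
    L.nonempty.image _, Subtype.coe_image_subset _ _, φ, hφ, ?_⟩
  have hdist : ∀ n, hausdorffDist (A n) (Subtype.val '' (L : Set X)) = dist (A' n) L :=
    fun n => by
    rw [NonemptyCompacts.dist_eq, ← hausdorffDist_image (isometry_subtype_coe (s := X))]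
    simp [A', inter_eq_self_of_subset_right (hAX n)]
  exact (tendsto_iff_dist_tendsto_zero.mp hL).congr fun n => (hdist (φ n)).symm

theorem mem_of_tendsto_hausdorffDist {F : ℕ → Set E} {L : Set E} {p : E} (hL : IsClosed L)
    (hLne : L.Nonempty) (hfin : ∀ n, hausdorffEDist (F n) L ≠ ⊤)
    (hconv : Tendsto (fun n => hausdorffDist (F n) L) atTop (𝓝 0)) (hp : ∀ n, p ∈ F n) :
    p ∈ L := by
  rw [hL.mem_iff_infDist_zero hLne]
  exact le_antisymm (ge_of_tendsto' hconv fun n => infDist_le_hausdorffDist_of_mem (hp n) (hfin n))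
    infDist_nonneg

theorem IsPreconnected.of_tendsto_hausdorffDist {K : ℕ → Set E} {L : Set E} (hL : IsCompact L)
    (hK : ∀ n, IsPreconnected (K n)) (hfin : ∀ n, hausdorffEDist (K n) L ≠ ⊤)
    (hconv : Tendsto (fun n => hausdorffDist (K n) L) atTop (𝓝 0)) : IsPreconnected L := by
  rw [isPreconnected_closed_iff]
  intro t t' ht ht' hcover ⟨a, haL, hat⟩ ⟨b, hbL, hbt'⟩
  by_contra hempty
  have hdisj : Disjoint (L ∩ t) (L ∩ t') := by
    rw [disjoint_iff_inter_eq_empty, ← inter_inter_distrib_left]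
    exact not_nonempty_iff_eq_empty.mp hempty
  obtain ⟨δ, hδ, hsep⟩ :=
    hdisj.exists_thickenings (hL.inter_right ht) (hL.inter_right ht').isClosed
  obtain ⟨n, hn⟩ := (hconv.eventually (gt_mem_nhds hδ)).exists
  have hnear : ∀ c ∈ L, ∃ p ∈ K n, dist p c < δ := fun c hc =>
    exists_dist_lt_of_hausdorffDist_lt' hc hn (hfin n)
  have hKcover : K n ⊆ thickening δ (L ∩ t) ∪ thickening δ (L ∩ t') := by
    intro p hp
    obtain ⟨q, hqL, hpq⟩ := exists_dist_lt_of_hausdorffDist_lt hp hn (hfin n)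
    rcases hcover hqL with hq | hq
    · exact Or.inl (mem_thickening_iff.2 ⟨q, ⟨hqL, hq⟩, hpq⟩)
    · exact Or.inr (mem_thickening_iff.2 ⟨q, ⟨hqL, hq⟩, hpq⟩)
  obtain ⟨p, hpK, hpa⟩ := hnear a haL
  obtain ⟨q, hqK, hqb⟩ := hnear b hbL
  obtain ⟨r, -, hrt, hrt'⟩ := hK n _ _ isOpen_thickening isOpen_thickening hKcover
    ⟨p, hpK, mem_thickening_iff.2 ⟨a, ⟨haL, hat⟩, hpa⟩⟩
    ⟨q, hqK, mem_thickening_iff.2 ⟨b, ⟨hbL, hbt'⟩, hqb⟩⟩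
  exact disjoint_left.mp hsep hrt hrt'

theorem ball_subset_sdiff_of_approx {B G : Set E} {U F : ℕ → Set E} {z : E} {ρ : ℝ}
    (hUB : ∀ n, U n ⊆ B) (hFU : ∀ n, Disjoint (F n) (U n))
    (hfin : ∀ n, hausdorffEDist (F n) G ≠ ⊤)
    (happrox : ∀ δ > 0, ∃ n c,
      dist z c < δ ∧ hausdorffDist (F n) G < δ ∧ ball c (ρ - δ) ⊆ U n) :
    ball z ρ ⊆ B \ G := by
  intro w hw
  rw [mem_ball] at hw
  obtain ⟨n, c, hzc, hFG, hc⟩ := happrox ((ρ - dist w z) / 3) (by linarith)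
  have hU : ∀ w', dist w' w < (ρ - dist w z) / 3 → w' ∈ U n := fun w' hw' =>
    hc (mem_ball.2 (by linarith [dist_triangle4 w' w z c]))
  refine ⟨hUB n (hU w (by rw [dist_self]; linarith)), fun hwG => ?_⟩
  obtain ⟨w', hw'F, hw'w⟩ := exists_dist_lt_of_hausdorffDist_lt' hwG hFG (hfin n)
  exact disjoint_left.mp (hFU n) hw'F (hU w' hw'w)

variable {B G : Set E} {Ωm : ℕ → Set E}

theorem eventually_mem_of_tendsto_hausdorffDist (hG : IsClosed G) (hGne : G.Nonempty)
    (hfin : ∀ n, hausdorffEDist (closure B \ Ωm n) G ≠ ⊤)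
    (hconv : Tendsto (fun n => hausdorffDist (closure B \ Ωm n) G) atTop (𝓝 0))
    {x : E} (hx : x ∈ B \ G) : ∀ᶠ n in atTop, x ∈ Ωm n := by
  have hpos : 0 < infDist x G := (hG.notMem_iff_infDist_pos hGne).mp hx.2
  filter_upwards [hconv.eventually (gt_mem_nhds hpos)] with n hn
  by_contra hxn
  have hxF : x ∈ closure B \ Ωm n := ⟨subset_closure hx.1, hxn⟩
  exact (infDist_le_hausdorffDist_of_mem hxF (hfin n)).not_gt hn

theorem closure_sdiff_sdiff_eq_of_tendsto (hΩB : ∀ n, Ωm n ⊆ B) (hG : IsClosed G)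
    (hGne : G.Nonempty) (hGB : G ⊆ closure B)
    (hfin : ∀ n, hausdorffEDist (closure B \ Ωm n) G ≠ ⊤)
    (hconv : Tendsto (fun n => hausdorffDist (closure B \ Ωm n) G) atTop (𝓝 0)) :
    closure B \ (B \ G) = G := by
  refine Subset.antisymm (fun p ⟨hpB, hpG⟩ => ?_) fun p hp => ⟨hGB hp, fun h => h.2 hp⟩
  by_cases hp : p ∈ B
  · by_contra h
    exact hpG ⟨hp, h⟩
  · exact mem_of_tendsto_hausdorffDist hG hGne hfin hconv
      fun n => ⟨hpB, fun h => hp (hΩB n h)⟩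

theorem ball_subset_sdiff_of_tendsto_center (hΩB : ∀ n, Ωm n ⊆ B)
    (hfin : ∀ n, hausdorffEDist (closure B \ Ωm n) G ≠ ⊤)
    (hconv : Tendsto (fun n => hausdorffDist (closure B \ Ωm n) G) atTop (𝓝 0))
    {c : ℕ → E} {z : E} {R : ℝ} (hc : Tendsto c atTop (𝓝 z))
    (hball : ∀ n, ball (c n) R ⊆ Ωm n) :
    ball z R ⊆ B \ G := by
  refine ball_subset_sdiff_of_approx hΩB (fun n => disjoint_sdiff_left) hfin fun δ hδ => ?_
  obtain ⟨n, hcn, hn⟩ := ((hc.eventually (ball_mem_nhds z hδ)).and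
    (hconv.eventually (gt_mem_nhds hδ))).exists
  exact ⟨n, c n, by rwa [dist_comm], hn, (ball_subset_ball (by linarith)).trans (hball n)⟩

end HausdorffLimits

section Frontier

variable {E : Type*} [NormedAddCommGroup E] [NormedSpace ℝ E]

theorem nonempty_closure_sdiff_of_isOpen [Nontrivial E] {B Ω : Set E} (hBb : Bornology.IsBounded B)
    (hΩo : IsOpen Ω) (hΩB : Ω ⊆ B) (hΩne : Ω.Nonempty) : (closure B \ Ω).Nonempty := by
  have hB : B ≠ univ := fun h => NormedSpace.unbounded_univ ℝ E (h ▸ hBb)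
  refine (nonempty_frontier_iff.mpr ⟨hΩne.mono hΩB, hB⟩).mono fun p hp => ?_
  exact ⟨hp.1, fun hpΩ => hp.2 (interior_maximal hΩB hΩo hpΩ)⟩

variable [FiniteDimensional ℝ E]

theorem infDist_frontier_eq_of_frontier_subset {U C : Set E} (hfr : frontier U ⊆ C)
    (hCU : Disjoint C U) {x : E} (hx : x ∈ U) : infDist x (frontier U) = infDist x C := by
  rcases eq_or_ne U univ with rfl | hU
  · rw [frontier_univ, disjoint_univ.mp hCU]
  obtain ⟨y, hy, hxy⟩ := exists_mem_frontier_infDist_compl_eq_dist hx hU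
  refine le_antisymm ?_ (infDist_le_infDist_of_subset hfr ⟨y, hy⟩)
  calc infDist x (frontier U) ≤ dist x y := infDist_le_dist_of_mem hy
    _ = infDist x Uᶜ := hxy.symm
    _ ≤ infDist x C := infDist_le_infDist_of_subset hCU.subset_compl_right ⟨y, hfr hy⟩

theorem infDist_le_infDist_frontier_add_hausdorffDist {B G U : Set E} (hU : IsOpen U)
    (hUB : U ⊆ B) (hfin : hausdorffEDist (closure B \ U) G ≠ ⊤) {x : E} (hx : x ∈ U) :
    infDist x G ≤ infDist x (frontier U) + hausdorffDist (closure B \ U) G := by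
  have hfr : frontier U ⊆ closure B \ U := by
    rw [hU.frontier_eq]
    exact fun p hp => ⟨closure_mono hUB hp.1, hp.2⟩
  rw [infDist_frontier_eq_of_frontier_subset hfr disjoint_sdiff_left hx]
  exact infDist_le_infDist_add_hausdorffDist hfin

end Frontier

section PropertyCMLimit

variable {k : ℕ} {M : ℝ} {B G : Set (EuclideanSpace ℝ (Fin k))}
  {Ωm : ℕ → Set (EuclideanSpace ℝ (Fin k))}

theorem exists_continuum_of_tendsto_hausdorffDist (hM : 0 < M) (hBb : Bornology.IsBounded B)
    (hΩo : ∀ n, IsOpen (Ωm n)) (hΩB : ∀ n, Ωm n ⊆ B) (hCM : ∀ n, PropertyCM M (Ωm n))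
    (hfin : ∀ n, hausdorffEDist (closure B \ Ωm n) G ≠ ⊤)
    (hconv : Tendsto (fun n => hausdorffDist (closure B \ Ωm n) G) atTop (𝓝 0))
    {x y : EuclideanSpace ℝ (Fin k)} (hx : ∀ n, x ∈ Ωm n) (hy : ∀ n, y ∈ Ωm n) :
    ∃ L, IsCompact L ∧ IsConnected L ∧ x ∈ L ∧ y ∈ L ∧
      ∀ z ∈ L, ball z (min (infDist x G) (infDist y G) / M) ⊆ B \ G := by
  choose K hKc hKconn hxK hyK hKΩ hKball using fun n => hCM n x (hx n) y (hy n)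
  have hKB : ∀ n, K n ⊆ closure B := fun n => (hKΩ n).trans ((hΩB n).trans subset_closure)
  obtain ⟨L, hLc, hLne, hLB, ψ, hψ, hKL⟩ :=
    hBb.isCompact_closure.exists_subseq_tendsto_hausdorffDist (fun n => (hKc n).isClosed)
      (fun n => ⟨x, hxK n⟩) hKB
  have hfinK : ∀ n, hausdorffEDist (K (ψ n)) L ≠ ⊤ := fun n =>
    hausdorffEDist_ne_top_of_nonempty_of_bounded ⟨x, hxK _⟩ hLne
      (hBb.closure.subset (hKB _)) (hBb.closure.subset hLB)
  refine ⟨L, hLc, ⟨hLne, .of_tendsto_hausdorffDist hLc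
      (fun n => (hKconn (ψ n)).isPreconnected) hfinK hKL⟩,
    mem_of_tendsto_hausdorffDist hLc.isClosed hLne hfinK hKL fun n => hxK _,
    mem_of_tendsto_hausdorffDist hLc.isClosed hLne hfinK hKL fun n => hyK _, fun z hz => ?_⟩
  set ε := fun n => hausdorffDist (closure B \ Ωm n) G
  have hε : Tendsto (fun n => ε (ψ n)) atTop (𝓝 0) := hconv.comp hψ.tendsto_atTop
  have hεM : Tendsto (fun n => ε (ψ n) / M) atTop (𝓝 0) := by simpa using hε.div_const M
  refine ball_subset_sdiff_of_approx (fun n => hΩB (ψ n)) (fun n => disjoint_sdiff_left)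
    (fun n => hfin (ψ n)) fun δ hδ => ?_
  obtain ⟨n, hKn, hεn, hεMn⟩ := ((hKL.eventually (gt_mem_nhds hδ)).and
    ((hε.eventually (gt_mem_nhds hδ)).and (hεM.eventually (gt_mem_nhds hδ)))).exists
  obtain ⟨c, hcK, hcz⟩ := exists_dist_lt_of_hausdorffDist_lt' hz hKn (hfinK n)
  refine ⟨n, c, by rwa [dist_comm], hεn, (ball_subset_ball ?_).trans (hKball (ψ n) c hcK)⟩
  have hxn := infDist_le_infDist_frontier_add_hausdorffDist (hΩo _) (hΩB _) (hfin _) (hx (ψ n))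
  have hyn := infDist_le_infDist_frontier_add_hausdorffDist (hΩo _) (hΩB _) (hfin _) (hy (ψ n))
  have hmin : min (infDist x G) (infDist y G) - ε (ψ n) ≤
      min (infDist x (frontier (Ωm (ψ n)))) (infDist y (frontier (Ωm (ψ n)))) := by
    rw [← min_sub_sub_right]
    exact min_le_min (by linarith) (by linarith)
  calc min (infDist x G) (infDist y G) / M - δ
      ≤ (min (infDist x G) (infDist y G) - ε (ψ n)) / M := by rw [sub_div]; linarith
    _ ≤ _ := div_le_div_of_nonneg_right hmin hM.le

theorem propertyCM_sdiff_of_tendsto_hausdorffDist (hM : 0 < M) (hB : IsOpen B)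
    (hBb : Bornology.IsBounded B) (hΩo : ∀ n, IsOpen (Ωm n)) (hΩB : ∀ n, Ωm n ⊆ B)
    (hCM : ∀ n, PropertyCM M (Ωm n)) (hG : IsClosed G) (hGne : G.Nonempty)
    (hGB : G ⊆ closure B)
    (hfin : ∀ n, hausdorffEDist (closure B \ Ωm n) G ≠ ⊤)
    (hconv : Tendsto (fun n => hausdorffDist (closure B \ Ωm n) G) atTop (𝓝 0)) :
    PropertyCM M (B \ G) := by
  intro x hx y hy
  obtain ⟨N, hN⟩ := eventually_atTop.mp
    ((eventually_mem_of_tendsto_hausdorffDist hG hGne hfin hconv hx).and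
      (eventually_mem_of_tendsto_hausdorffDist hG hGne hfin hconv hy))
  obtain ⟨L, hLc, hLconn, hxL, hyL, hLball⟩ :=
    exists_continuum_of_tendsto_hausdorffDist (Ωm := fun n => Ωm (n + N)) hM hBb
      (fun n => hΩo _) (fun n => hΩB _) (fun n => hCM _) (fun n => hfin _)
      ((tendsto_add_atTop_iff_nat N).mpr hconv)
      (fun n => (hN (n + N) (Nat.le_add_left N n)).1)
      (fun n => (hN (n + N) (Nat.le_add_left N n)).2)
  have hfr : frontier (B \ G) ⊆ G := by
    rw [(hB.sdiff hG).frontier_eq]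
    exact (sdiff_subset_sdiff_left (closure_mono sdiff_subset)).trans_eq
      (closure_sdiff_sdiff_eq_of_tendsto hΩB hG hGne hGB hfin hconv)
  have hd : 0 < min (infDist x G) (infDist y G) / M :=
    div_pos (lt_min ((hG.notMem_iff_infDist_pos hGne).mp hx.2)
      ((hG.notMem_iff_infDist_pos hGne).mp hy.2)) hM
  refine ⟨L, hLc, hLconn, hxL, hyL, fun z hz => hLball z hz (mem_ball_self hd), ?_⟩
  rw [infDist_frontier_eq_of_frontier_subset hfr disjoint_sdiff_right hx,
    infDist_frontier_eq_of_frontier_subset hfr disjoint_sdiff_right hy]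
  exact hLball

end PropertyCMLimit

/-- Theorem 2.1: `𝒞_{M,R}` is compact for the Hausdorff complementary distance. -/
theorem stmt11 {k : ℕ} (Bstar : Set (EuclideanSpace ℝ (Fin k)))
    (hBo : IsOpen Bstar) (hBb : Bornology.IsBounded Bstar)
    (M R : ℝ) (hM : 1 < M) (hR : 0 < R)
    (Ωm : ℕ → Set (EuclideanSpace ℝ (Fin k)))
    (hΩm : ∀ m, ClassCMR M R Bstar (Ωm m)) :
    ∃ Ω : Set (EuclideanSpace ℝ (Fin k)), ClassCMR M R Bstar Ω ∧
      ∃ φ : ℕ → ℕ, StrictMono φ ∧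
        Tendsto (fun j => hausdorffDist (closure Bstar \ Ωm (φ j)) (closure Bstar \ Ω))
          atTop (nhds 0) := by
  choose hΩo hΩB hball hCM using hΩm
  choose c hc using hball
  have hΩne : ∀ m, (Ωm m).Nonempty := fun m => ⟨c m, hc m (mem_ball_self hR)⟩
  rcases subsingleton_or_nontrivial (EuclideanSpace ℝ (Fin k)) with _ | _
  -- `k = 0`: every `Ωₘ` is the whole one-point space, so all complements are empty.
  · refine ⟨Ωm 0, ⟨hΩo 0, hΩB 0, ⟨c 0, hc 0⟩, hCM 0⟩, id, strictMono_id, ?_⟩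
    simp [Subsingleton.eq_univ_of_nonempty (hΩne _)]
  have hX := hBb.isCompact_closure
  have hFne : ∀ m, (closure Bstar \ Ωm m).Nonempty := fun m =>
    nonempty_closure_sdiff_of_isOpen hBb (hΩo m) (hΩB m) (hΩne m)
  obtain ⟨G, hGc, hGne, hGB, φ, hφ, hconv⟩ := hX.exists_subseq_tendsto_hausdorffDist
    (fun m => isClosed_closure.sdiff (hΩo m)) hFne fun m => sdiff_subset
  obtain ⟨z, -, ψ, hψ, hcz⟩ := hX.tendsto_subseq (x := fun n => c (φ n))
    fun n => subset_closure (hΩB _ (hc _ (mem_ball_self hR)))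
  have hfin : ∀ n, hausdorffEDist (closure Bstar \ Ωm (φ (ψ n))) G ≠ ⊤ := fun n =>
    hausdorffEDist_ne_top_of_nonempty_of_bounded (hFne _) hGne
      (hBb.closure.subset sdiff_subset) (hBb.closure.subset hGB)
  have hconv' := hconv.comp hψ.tendsto_atTop
  refine ⟨Bstar \ G, ⟨hBo.sdiff hGc.isClosed, sdiff_subset,
    ⟨z, ball_subset_sdiff_of_tendsto_center (fun n => hΩB _) hfin hconv' hcz fun n => hc _⟩,
    propertyCM_sdiff_of_tendsto_hausdorffDist (zero_lt_one.trans hM) hBo hBb (fun n => hΩo _)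
      (fun n => hΩB _) (fun n => hCM _) hGc.isClosed hGne hGB hfin hconv'⟩,
    φ ∘ ψ, hφ.comp hψ, ?_⟩
  rwa [closure_sdiff_sdiff_eq_of_tendsto (fun n => hΩB _) hGc.isClosed hGne hGB hfin hconv']
end

section
/- Let $\Omega$ be a connected open subset of a bounded open set $B^* \subset \mathbb{R}^k$ and let $x, y \in \Omega$. Define $d_0(x,y) = \sup\{d > 0 : \exists K \subset \Omega \text{ connected compact}, x, y \in K, \bigcup_{z\in K} B(z,d) \subset \Omega\}$ (a supremum over a nonempty set since $\Omega$ is path connected). Then the supremum is attained: there exists a connected compact set $K_0 \subset \Omega$ with $x, y \in K_0$ and $\bigcup_{z \in K_0} B(z, d_0(x,y)) \subset \Omega$. -/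
open Metric

theorem stmt13 {k : ℕ} (Bstar : Set (EuclideanSpace ℝ (Fin k)))
    (hBo : IsOpen Bstar) (hBb : Bornology.IsBounded Bstar)
    (Ω : Set (EuclideanSpace ℝ (Fin k))) (hΩo : IsOpen Ω) (hΩc : IsConnected Ω)
    (hΩB : Ω ⊆ Bstar)
    (x y : EuclideanSpace ℝ (Fin k)) (hx : x ∈ Ω) (hy : y ∈ Ω) :
    ∃ K0 : Set (EuclideanSpace ℝ (Fin k)),
      IsCompact K0 ∧ IsConnected K0 ∧ x ∈ K0 ∧ y ∈ K0 ∧ K0 ⊆ Ω ∧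
      ∀ z ∈ K0, ball z
        (sSup {d : ℝ | 0 < d ∧ ∃ K : Set (EuclideanSpace ℝ (Fin k)),
          IsCompact K ∧ IsConnected K ∧ x ∈ K ∧ y ∈ K ∧ K ⊆ Ω ∧
          ∀ z' ∈ K, ball z' d ⊆ Ω}) ⊆ Ω := by
  classical
  set S : Set ℝ := {d : ℝ | 0 < d ∧ ∃ K : Set (EuclideanSpace ℝ (Fin k)),
          IsCompact K ∧ IsConnected K ∧ x ∈ K ∧ y ∈ K ∧ K ⊆ Ω ∧
          ∀ z' ∈ K, ball z' d ⊆ Ω} with hSdef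
  set d0 : ℝ := sSup S with hd0
  by_cases hpos : 0 < d0
  swap
  · -- trivial case: the ball has nonpositive radius, use a path from x to y
    have hpc : IsPathConnected Ω := hΩo.isConnected_iff_isPathConnected.1 hΩc
    obtain ⟨γ, hγ⟩ : JoinedIn Ω x y := hpc.joinedIn x hx y hy
    refine ⟨Set.range γ, isCompact_range γ.continuous, isConnected_range γ.continuous,
      ⟨0, γ.source⟩, ⟨1, γ.target⟩, ?_, ?_⟩
    · rintro _ ⟨t, rfl⟩; exact hγ t
    · intro z _
      rw [ball_eq_empty.2 (not_lt.1 hpos)]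
      exact Set.empty_subset _
  -- main case
  have hSne : S.Nonempty := by
    by_contra h
    rw [Set.not_nonempty_iff_eq_empty] at h
    rw [hd0, h, Real.sSup_empty] at hpos
    exact lt_irrefl _ hpos
  have h1 : ∀ n : ℕ, ∃ d : ℝ, (d0 - 1 / (n + 1) < d) ∧ 0 < d ∧
      ∃ K : Set (EuclideanSpace ℝ (Fin k)), IsCompact K ∧ IsConnected K ∧ x ∈ K ∧ y ∈ K ∧
        K ⊆ Ω ∧ ∀ z' ∈ K, ball z' d ⊆ Ω := by
    intro n
    have hlt : d0 - 1 / (n + 1 : ℝ) < sSup S := by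
      rw [← hd0]; have : (0:ℝ) < 1 / (n + 1) := by positivity
      linarith
    obtain ⟨d, hdS, hd⟩ := exists_lt_of_lt_csSup hSne hlt
    exact ⟨d, hd, hdS.1, hdS.2⟩
  choose d hdlt hdpos K hKc hKconn hxK hyK hKΩ hKball using h1
  set T : Set (EuclideanSpace ℝ (Fin k)) := closure Bstar with hT
  have hTc : IsCompact T := hBb.isCompact_closure
  have hKT : ∀ n, K n ⊆ T := fun n => (hKΩ n).trans (hΩB.trans subset_closure)
  set F : ℕ → Set (EuclideanSpace ℝ (Fin k)) :=
    fun n => closure (⋃ m, ⋃ (_ : n ≤ m), K m) with hF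
  have hFT : ∀ n, F n ⊆ T :=
    fun n => closure_minimal (Set.iUnion₂_subset fun m _ => hKT m) isClosed_closure
  have hKF : ∀ n m, n ≤ m → K m ⊆ F n := by
    intro n m hnm z hz
    exact subset_closure (Set.mem_biUnion hnm hz)
  set K0 : Set (EuclideanSpace ℝ (Fin k)) := ⋂ n, F n with hK0
  have hK0c : IsCompact K0 :=
    hTc.of_isClosed_subset (isClosed_iInter fun n => isClosed_closure)
      ((Set.iInter_subset _ 0).trans (hFT 0))
  have hxK0 : x ∈ K0 := Set.mem_iInter.2 fun n => hKF n n le_rfl (hxK n)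
  have hyK0 : y ∈ K0 := Set.mem_iInter.2 fun n => hKF n n le_rfl (hyK n)
  have hK0ball : ∀ z ∈ K0, ∀ w, dist w z < d0 → w ∈ Ω := by
    intro z hz w hw
    set r : ℝ := dist w z with hr
    obtain ⟨n, hn⟩ := exists_nat_one_div_lt (show (0:ℝ) < (d0 - r) / 2 by linarith)
    have hzn : z ∈ F n := Set.mem_iInter.1 hz n
    rw [Metric.mem_closure_iff] at hzn
    obtain ⟨p, hp, hzp⟩ := hzn ((d0 - r) / 2) (by linarith)
    obtain ⟨m, hm, hpm⟩ := by
      simpa using hp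
    have h1m : 1 / (m + 1 : ℝ) ≤ 1 / (n + 1 : ℝ) := by
      apply one_div_le_one_div_of_le (by positivity)
      exact_mod_cast by omega
    have hdm : d0 - (d0 - r) / 2 < d m := by
      have := hdlt m; linarith
    have hwp : dist w p < d m := by
      have := dist_triangle w z p
      linarith
    exact hKball m p hpm hwp
  have hK0Ω : K0 ⊆ Ω := fun z hz =>
    hK0ball z hz z (by simpa [dist_self] using hpos)
  have hK0conn : IsPreconnected K0 := by
    intro u v hu hv hsub hau hbv
    by_contra hne
    rw [Set.not_nonempty_iff_eq_empty] at hne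
    obtain ⟨a, haK, hau⟩ := hau
    obtain ⟨b, hbK, hbv⟩ := hbv
    have hanv : a ∉ v := fun h => by
      have : a ∈ K0 ∩ (u ∩ v) := ⟨haK, hau, h⟩
      rw [hne] at this; exact this
    have hbnu : b ∉ u := fun h => by
      have : b ∈ K0 ∩ (u ∩ v) := ⟨hbK, h, hbv⟩
      rw [hne] at this; exact this
    set E : Set (EuclideanSpace ℝ (Fin k)) := K0 \ v with hE
    set Fs : Set (EuclideanSpace ℝ (Fin k)) := K0 \ u with hFs
    have hEc : IsCompact E := hK0c.diff hv
    have hFc : IsCompact Fs := hK0c.diff hu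
    have hEFdisj : Disjoint E Fs := by
      rw [Set.disjoint_left]
      rintro z ⟨hz1, hz2⟩ ⟨_, hz4⟩
      rcases hsub hz1 with h | h
      exacts [hz4 h, hz2 h]
    obtain ⟨U, V, hU, hV, hEU, hFV, hUV⟩ :=
      SeparatedNhds.of_isCompact_isCompact hEc hFc hEFdisj
    have hK0UV : K0 ⊆ U ∪ V := by
      intro z hz
      by_cases hzv : z ∈ v
      · exact Or.inr (hFV ⟨hz, fun hzu => by
          have : z ∈ K0 ∩ (u ∩ v) := ⟨hz, hzu, hzv⟩
          rw [hne] at this; exact this⟩)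
      · exact Or.inl (hEU ⟨hz, hzv⟩)
    -- eventually K m ⊆ U ∪ V
    have hev : ∃ N : ℕ, ∀ m, N ≤ m → K m ⊆ U ∪ V := by
      by_contra hc
      push_neg at hc
      have hc' : ∀ n : ℕ, ∃ m, n ≤ m ∧ ∃ p ∈ K m, p ∉ U ∪ V := by
        intro n
        obtain ⟨m, hm1, hm2⟩ := hc n
        rw [Set.not_subset] at hm2
        obtain ⟨p, hp1, hp2⟩ := hm2
        exact ⟨m, hm1, p, hp1, hp2⟩
      choose m hmn p hpK hpUV using hc'
      obtain ⟨q, hqT, φ, hφ, hq⟩ := hTc.tendsto_subseq (fun n => hKT (m n) (hpK n))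
      have hqK0 : q ∈ K0 := by
        refine Set.mem_iInter.2 fun n => ?_
        refine mem_closure_of_tendsto hq ?_
        filter_upwards [Filter.eventually_ge_atTop n] with j hj
        exact Set.mem_biUnion (le_trans (le_trans hj (hφ.le_apply)) (hmn (φ j))) (hpK (φ j))
      have hqc : q ∈ (U ∪ V)ᶜ := by
        have hcl : IsClosed ((U ∪ V)ᶜ) := (hU.union hV).isClosed_compl
        exact hcl.mem_of_tendsto hq (Filter.Eventually.of_forall fun j => hpUV (φ j))
      exact hqc (hK0UV hqK0)
    obtain ⟨N, hN⟩ := hev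
    -- find m ≥ N such that K m meets the side not containing x
    rcases hK0UV hxK0 with hxU | hxV
    · -- x ∈ U; find K m meeting V using b ∈ Fs ⊆ V
      have hbV : b ∈ V := hFV ⟨hbK, hbnu⟩
      have hbF : b ∈ F N := Set.mem_iInter.1 hbK N
      rw [_root_.mem_closure_iff] at hbF
      obtain ⟨c, hcV, hcU⟩ := hbF V hV hbV
      simp only [Set.mem_iUnion] at hcU
      obtain ⟨m, hm, hcm⟩ := hcU
      obtain ⟨w, hw1, hw2, hw3⟩ := (hKconn m).isPreconnected U V hU hV (hN m hm)
        ⟨x, hxK m, hxU⟩ ⟨c, hcm, hcV⟩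
      exact (hUV.le_bot ⟨hw2, hw3⟩)
    · -- x ∈ V; find K m meeting U using a ∈ E ⊆ U
      have haU : a ∈ U := hEU ⟨haK, hanv⟩
      have haF : a ∈ F N := Set.mem_iInter.1 haK N
      rw [_root_.mem_closure_iff] at haF
      obtain ⟨c, hcU, hcm'⟩ := haF U hU haU
      simp only [Set.mem_iUnion] at hcm'
      obtain ⟨m, hm, hcm⟩ := hcm'
      obtain ⟨w, hw1, hw2, hw3⟩ := (hKconn m).isPreconnected U V hU hV (hN m hm)
        ⟨c, hcm, hcU⟩ ⟨x, hxK m, hxV⟩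
      exact (hUV.le_bot ⟨hw2, hw3⟩)
  refine ⟨K0, hK0c, ⟨⟨x, hxK0⟩, hK0conn⟩, hxK0, hyK0, hK0Ω, ?_⟩
  intro z hz w hw
  exact hK0ball z hz w (mem_ball.1 hw)
end

section
/- Let $B^* \subset \mathbb{R}^k$ be a bounded open set, $A$ a symmetric $C^1$ matrix field on $\overline{B^*}$ with $\alpha|\xi|^2 \le \langle A\xi,\xi\rangle$ ($\alpha > 0$), $f \in H^{-1}(B^*)$. Let open sets $\Omega_m \to \Omega^*$ in the Hausdorff complementary distance, let $u_m \in H_0^1(\Omega_m)$ (extended by zero) solve $-\mathrm{div}(A\nabla u_m) = f|_{\Omega_m}$ weakly, and suppose $u_m \rightharpoonup \hat{u}$ weakly in $H_0^1(B^*)$. Then $\int_{B^*}\langle A\nabla\hat{u}, \nabla\phi\rangle\,dx = \langle f, \phi\rangle$ for every $\phi \in C_0^\infty(\Omega^*)$. -/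
open Metric Filter MeasureTheory

/-- A test function for the domain `Ω`: smooth with compact support contained in `Ω`. -/
def IsTestFun {k : ℕ} (Ω : Set (EuclideanSpace ℝ (Fin k)))
    (φ : EuclideanSpace ℝ (Fin k) → ℝ) : Prop :=
  ContDiff ℝ (⊤ : ℕ∞) φ ∧ HasCompactSupport φ ∧ tsupport φ ⊆ Ω

theorem stmt19 {k : ℕ} (Bstar : Set (EuclideanSpace ℝ (Fin k)))
    (hBo : IsOpen Bstar) (hBb : Bornology.IsBounded Bstar)
    -- the coefficient matrix `A`, symmetric, `C¹` on `closure Bstar`, coercive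
    (A : EuclideanSpace ℝ (Fin k) → EuclideanSpace ℝ (Fin k) →L[ℝ] EuclideanSpace ℝ (Fin k))
    (hA : ContDiffOn ℝ 1 A (closure Bstar))
    (hAsym : ∀ x ξ η, (inner ℝ (A x ξ) η : ℝ) = inner ℝ ξ (A x η))
    (α : ℝ) (hα : 0 < α)
    (hcoerc : ∀ x ξ, α * ‖ξ‖ ^ 2 ≤ (inner ℝ (A x ξ) ξ : ℝ))
    -- `f ∈ H^{-1}(B*)`, linear and bounded for the `H^1_0(B*)` norm
    (f : (EuclideanSpace ℝ (Fin k) → ℝ) → ℝ) (Cf : ℝ) (hCf : 0 ≤ Cf)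
    (hflin : ∀ (c : ℝ) (φ ψ : EuclideanSpace ℝ (Fin k) → ℝ),
      f (φ + ψ) = f φ + f ψ ∧ f (c • φ) = c * f φ)
    (hfbound : ∀ φ, IsTestFun Bstar φ →
      |f φ| ≤ Cf * Real.sqrt (∫ x in Bstar, ‖gradient φ x‖ ^ 2))
    -- `Ω_m → Ω*` in the Hausdorff complementary distance
    (Ωm : ℕ → Set (EuclideanSpace ℝ (Fin k))) (Ωstar : Set (EuclideanSpace ℝ (Fin k)))
    (hΩm : ∀ m, IsOpen (Ωm m)) (hΩmB : ∀ m, Ωm m ⊆ Bstar)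
    (hΩs : IsOpen Ωstar) (hΩsB : Ωstar ⊆ Bstar)
    (hconv : Tendsto
      (fun m => hausdorffDist (closure Bstar \ Ωm m) (closure Bstar \ Ωstar))
      atTop (nhds 0))
    -- `u_m ∈ H^1_0(Ω_m)` (extended by zero), with gradients `gum m ∈ L²`
    (um : ℕ → EuclideanSpace ℝ (Fin k) → ℝ)
    (gum : ℕ → EuclideanSpace ℝ (Fin k) → EuclideanSpace ℝ (Fin k))
    (hum : ∀ m, MemLp (um m) 2 (volume.restrict Bstar))
    (hgum : ∀ m, MemLp (gum m) 2 (volume.restrict Bstar))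
    (humzero : ∀ m, ∀ᵐ x ∂(volume.restrict (Bstar \ Ωm m)), um m x = 0)
    (happrox : ∀ m, ∃ φs : ℕ → EuclideanSpace ℝ (Fin k) → ℝ,
      (∀ j, IsTestFun (Ωm m) (φs j)) ∧
      Tendsto (fun j => ∫ x in Bstar, ‖gradient (φs j) x - gum m x‖ ^ 2) atTop (nhds 0) ∧
      Tendsto (fun j => ∫ x in Bstar, (φs j x - um m x) ^ 2) atTop (nhds 0))
    -- the weak formulation of `-div(A∇u_m) = f|_{Ω_m}`
    (hweak : ∀ m, ∀ φ, IsTestFun (Ωm m) φ →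
      (∫ x in Bstar, (inner ℝ (A x (gum m x)) (gradient φ x) : ℝ)) = f φ)
    -- `u_m ⇀ û` weakly in `H^1_0(B*)`: the gradients converge weakly in `L²(B*)`
    -- and the functions converge weakly in `L²(B*)`
    (uhat : EuclideanSpace ℝ (Fin k) → ℝ)
    (guhat : EuclideanSpace ℝ (Fin k) → EuclideanSpace ℝ (Fin k))
    (huhat : MemLp uhat 2 (volume.restrict Bstar))
    (hguhat : MemLp guhat 2 (volume.restrict Bstar))
    (hweakconvgrad : ∀ v : EuclideanSpace ℝ (Fin k) → EuclideanSpace ℝ (Fin k),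
      MemLp v 2 (volume.restrict Bstar) →
      Tendsto (fun m => ∫ x in Bstar, (inner ℝ (gum m x) (v x) : ℝ)) atTop
        (nhds (∫ x in Bstar, (inner ℝ (guhat x) (v x) : ℝ))))
    (hweakconvfun : ∀ w : EuclideanSpace ℝ (Fin k) → ℝ,
      MemLp w 2 (volume.restrict Bstar) →
      Tendsto (fun m => ∫ x in Bstar, um m x * w x) atTop
        (nhds (∫ x in Bstar, uhat x * w x))) :
    ∀ φ, IsTestFun Ωstar φ →
      (∫ x in Bstar, (inner ℝ (A x (guhat x)) (gradient φ x) : ℝ)) = f φ := by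
  rintro φ ⟨hφ1, hφ2, hφ3⟩
  rcases Nat.eq_zero_or_pos k with hk | hk
  · -- degenerate case: the space is a single point, gradients vanish
    haveI : Subsingleton (EuclideanSpace ℝ (Fin k)) := by subst hk; infer_instance
    have hgrad : ∀ x, gradient φ x = 0 := fun x => Subsingleton.elim _ _
    have h1 : (∫ x in Bstar, (inner ℝ (A x (guhat x)) (gradient φ x) : ℝ)) = 0 := by
      simp [hgrad]
    have h2 : |f φ| ≤ 0 := by
      have := hfbound φ ⟨hφ1, hφ2, hφ3.trans hΩsB⟩
      simpa [hgrad] using this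
    rw [h1]
    have := abs_nonneg (f φ)
    have : |f φ| = 0 := le_antisymm h2 this
    exact (abs_eq_zero.mp this).symm
  · haveI : NeZero k := ⟨hk.ne'⟩
    haveI : Nontrivial (EuclideanSpace ℝ (Fin k)) := inferInstance
    -- the comparison vector field v x = A x (∇φ x)
    set v : EuclideanSpace ℝ (Fin k) → EuclideanSpace ℝ (Fin k) :=
      fun x => A x (gradient φ x) with hv_def
    have hgradc : Continuous (gradient φ) :=
      (InnerProductSpace.toDual ℝ _).symm.continuous.comp (hφ1.continuous_fderiv (by simp))
    have hAc : ContinuousOn A (closure Bstar) := hA.continuousOn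
    -- v is in L²(B*)
    have hveq : ∀ᵐ x ∂(volume.restrict Bstar), v x = A x (gradient φ x) :=
      ae_of_all _ fun x => rfl
    have hvmeas : AEStronglyMeasurable v (volume.restrict Bstar) := by
      have hcont : ContinuousOn v Bstar := by
        refine ContinuousOn.clm_apply (hAc.mono subset_closure) (hgradc.continuousOn)
      exact hcont.aestronglyMeasurable hBo.measurableSet
    haveI : IsFiniteMeasure (volume.restrict Bstar) :=
      ⟨by rw [Measure.restrict_apply_univ]; exact hBb.measure_lt_top⟩
    obtain ⟨MA, hMA⟩ : ∃ MA, ∀ x ∈ closure Bstar, ‖A x‖ ≤ MA :=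
      hBb.isCompact_closure.exists_bound_of_continuousOn hAc
    obtain ⟨Mg, hMg⟩ : ∃ Mg, ∀ x ∈ closure Bstar, ‖gradient φ x‖ ≤ Mg :=
      hBb.isCompact_closure.exists_bound_of_continuousOn hgradc.continuousOn
    have hvbound : ∀ᵐ x ∂(volume.restrict Bstar), ‖v x‖ ≤ MA * Mg := by
      filter_upwards [ae_restrict_mem hBo.measurableSet] with x hx
      calc ‖v x‖ ≤ ‖A x‖ * ‖gradient φ x‖ := (A x).le_opNorm _
        _ ≤ MA * Mg := by
            apply mul_le_mul (hMA x (subset_closure hx)) (hMg x (subset_closure hx)) (norm_nonneg _)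
            exact (norm_nonneg _).trans (hMA x (subset_closure hx))
    have hv : MemLp v 2 (volume.restrict Bstar) :=
      MemLp.of_bound hvmeas _ hvbound
    -- The Γ-property: eventually tsupport φ ⊆ Ωm m
    obtain ⟨δ, hδ, hthick⟩ := hφ2.exists_thickening_subset_open hΩs hφ3
    have hev : ∀ᶠ m in atTop,
        hausdorffDist (closure Bstar \ Ωm m) (closure Bstar \ Ωstar) < δ :=
      hconv.eventually (gt_mem_nhds hδ)
    have hsub : ∀ᶠ m in atTop, tsupport φ ⊆ Ωm m := by
      filter_upwards [hev] with m hm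
      intro x hx
      by_contra hxm
      have hxB : x ∈ Bstar := hΩsB (hφ3 hx)
      have hxFm : x ∈ closure Bstar \ Ωm m := ⟨subset_closure hxB, hxm⟩
      have hFs : (closure Bstar \ Ωstar).Nonempty := by
        by_contra h
        rw [Set.not_nonempty_iff_eq_empty, Set.diff_eq_empty] at h
        have hcl : IsClosed Bstar := by
          have : closure Bstar = Bstar :=
            subset_antisymm (h.trans hΩsB) subset_closure
          rw [← this]; exact isClosed_closure
        have : Bstar = Set.univ :=
          IsClopen.eq_univ ⟨hcl, hBo⟩ ⟨x, hxB⟩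
        exact NormedSpace.unbounded_univ ℝ (EuclideanSpace ℝ (Fin k)) (this ▸ hBb)
      have hfin : EMetric.hausdorffEdist (closure Bstar \ Ωm m) (closure Bstar \ Ωstar) ≠ ⊤ :=
        Metric.hausdorffEdist_ne_top_of_nonempty_of_bounded ⟨x, hxFm⟩ hFs
          ((hBb.closure.subset (Set.diff_subset)))
          ((hBb.closure.subset (Set.diff_subset)))
      have h1 : infDist x (closure Bstar \ Ωstar) < δ :=
        lt_of_le_of_lt (infDist_le_hausdorffDist_of_mem hxFm hfin) hm
      obtain ⟨y, hyF, hyd⟩ := (infDist_lt_iff hFs).mp h1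
      have : y ∈ thickening δ (tsupport φ) := by
        rw [mem_thickening_iff]
        exact ⟨x, hx, by rwa [dist_comm]⟩
      exact hyF.2 (hthick this)
    -- eventually the weak equation holds for φ
    have htest : ∀ᶠ m in atTop,
        (∫ x in Bstar, (inner ℝ (gum m x) (v x) : ℝ)) = f φ := by
      filter_upwards [hsub] with m hm
      rw [← hweak m φ ⟨hφ1, hφ2, hm⟩]
      refine integral_congr_ae (ae_of_all _ fun x => ?_)
      exact (hAsym x (gum m x) (gradient φ x)).symm
    have hlim := hweakconvgrad v hv
    have : (∫ x in Bstar, (inner ℝ (guhat x) (v x) : ℝ)) = f φ :=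
      tendsto_nhds_unique hlim
        (Tendsto.congr' (htest.mono fun m h => h.symm) tendsto_const_nhds)
    rw [← this]
    refine integral_congr_ae (ae_of_all _ fun x => ?_)
    exact hAsym x (guhat x) (gradient φ x)
end
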